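/- Let G and H be finite graphs with no isolated vertices, and let φ, ψ: G → H be ×-homotopic graph morphisms. Then the induced functors φ_*, ψ_*: Π(G) → Π(H) are naturally isomorphic: for each vertex w of G there is an ≡-class γ_w of walks in H from φ(w) to ψ(w) such that for every walk α from w to w' in G, the naturality square commutes in Π(H): γ_w * (ψ∘α) ≡ (φ∘α) * γ_{w'}. -/

import Mathlib

/-- A graph: vertex type `V` with a symmetric adjacency relation (loops allowed). -/
structure XGraph (V : Type) where
  Adj : V → V → Prop
  symm : Symmetric Adj

variable {V W X : Type}

/-- `l` is the (nonempty) vertex sequence of a walk in `G`. -/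
def IsWalk (G : XGraph V) (l : List V) : Prop :=
  l ≠ [] ∧ l.Chain' G.Adj

/-- `l` is a walk in `G` from `x` to `y`. -/
def IsWalkFrom (G : XGraph V) (x y : V) (l : List V) : Prop :=
  l.Chain' G.Adj ∧ l.head? = some x ∧ l.getLast? = some y

/-- Concatenation of walks sharing an endpoint: follow `l`, then `m`. -/
def wconcat (l m : List V) : List V := l ++ m.tail

/-- A walk is prunable if some vertex `vᵢ` satisfies `vᵢ = vᵢ₊₂`. -/
def Prunable (l : List V) : Prop :=
  ∃ (p s : List V) (a b : V), l = p ++ a :: b :: a :: s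

/-- `m` is obtained from `l` by a single prune (deleting `vᵢ, vᵢ₊₁` when `vᵢ = vᵢ₊₂`). -/
def PruneOf (l m : List V) : Prop :=
  ∃ (p s : List V) (a b : V), l = p ++ a :: b :: a :: s ∧ m = p ++ a :: s

/-- A single prune step (in either direction) between walks of `G`. -/
def PruneStep (G : XGraph V) (l m : List V) : Prop :=
  IsWalk G l ∧ IsWalk G m ∧ (PruneOf l m ∨ PruneOf m l)

/-- Prune equivalence: the equivalence relation on walks of `G` generated by prunes. -/
def PruneEqv (G : XGraph V) : List V → List V → Prop :=
  Relation.EqvGen (PruneStep G)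

/-- A spider move: two walks of `G` of the same length which agree at every index
except (at most) a single interior index. -/
def SpiderStep (G : XGraph V) (l m : List V) : Prop :=
  IsWalk G l ∧ IsWalk G m ∧ l.length = m.length ∧
    ∃ i : ℕ, 0 < i ∧ i + 1 < l.length ∧ ∀ j : ℕ, j ≠ i → l[j]? = m[j]?

/-- Homotopy rel endpoints (`≡`): the equivalence relation on walks of `G`
generated by prunes and spider moves. -/
def HomEqv (G : XGraph V) : List V → List V → Prop :=
  Relation.EqvGen (fun l m => PruneStep G l m ∨ SpiderStep G l m)

/-- A graph morphism. -/
def IsHom (G : XGraph V) (H : XGraph W) (f : V → W) : Prop :=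
  ∀ {u v : V}, G.Adj u v → H.Adj (f u) (f v)

/-- One step of a ×-homotopy between graph morphisms. -/
def HtpyStep (G : XGraph V) (H : XGraph W) (f g : V → W) : Prop :=
  IsHom G H f ∧ IsHom G H g ∧ ∀ u v, G.Adj u v → H.Adj (f u) (g v)

/-- ×-homotopy of graph morphisms. -/
def Homotopic (G : XGraph V) (H : XGraph W) : (V → W) → (V → W) → Prop :=
  Relation.ReflTransGen (HtpyStep G H)

/-!
Since natural transformations between the induced functors compose vertically, it suffices to
treat a single ×-homotopy step `f ⟶ g`. Choosing a neighbour `u w` of every vertex `w` (none is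
isolated), take `γ w = (f w, g (u w), g w)`. Naturality only has to be checked along single
edges `w ∼ v`, where three spider moves turn
`(f w, g (u w), g w, g v)` into `(f w, f v, g (u v), g v)`, each move going through an edge
`f x ∼ g y` provided by the homotopy step.
-/

open List Relation

lemma Relation.EqvGen.eq_of_forall_rel_imp_eq {α β : Type*} {r : α → α → Prop}
    {F : α → β} (hF : ∀ a b, r a b → F a = F b) {a b : α} (h : EqvGen r a b) : F a = F b :=
  (Setoid.ker F).iseqv.eqvGen_iff.mp (h.mono hF)

lemma Relation.EqvGen.map_of_invariant {α β : Type*} {r : α → α → Prop}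
    {s : β → β → Prop} {P : α → Prop} (F : α → β)
    (hP : ∀ a b, r a b → (P a ↔ P b)) (hF : ∀ a b, P a → r a b → s (F a) (F b))
    {a b : α} (h : EqvGen r a b) (ha : P a) :
    EqvGen s (F a) (F b) := by
  have hPeq {x y : α} (hxy : EqvGen r x y) : P x ↔ P y :=
    propext_iff.mp (hxy.eq_of_forall_rel_imp_eq fun a b h => propext (hP a b h))
  induction h with
  | rel x y hxy => exact .rel _ _ (hF x y ha hxy)
  | refl => exact .refl _
  | symm x y hxy ih => exact .symm _ _ (ih ((hPeq hxy).mpr ha))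
  | trans x y z hxy _ ih₁ ih₂ => exact .trans _ _ _ (ih₁ ha) (ih₂ ((hPeq hxy).mp ha))

section Walks

variable {G : XGraph V} {H : XGraph W}

lemma head?_wconcat {l : List V} (hl : l ≠ []) (m : List V) :
    (wconcat l m).head? = l.head? := by
  cases l <;> simp_all [wconcat]

lemma getLast?_wconcat {l m : List V} (h : l.getLast? = m.head?) :
    (wconcat l m).getLast? = m.getLast? := by
  rcases m with _ | ⟨a, _ | ⟨b, t⟩⟩
  · simp_all [wconcat]
  · simpa [wconcat] using h
  · simp [wconcat, getLast?_append, getLast?_cons]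

lemma wconcat_assoc (a : List V) {b : List V} (hb : b ≠ []) (c : List V) :
    wconcat (wconcat a b) c = wconcat a (wconcat b c) := by
  cases b <;> simp_all [wconcat]

lemma IsWalk.wconcat {l m : List V} (hl : IsWalk G l) (hm : IsChain G.Adj m)
    (hlink : l.getLast? = m.head?) : IsWalk G (wconcat l m) := by
  refine ⟨by simp [_root_.wconcat, hl.1], ?_⟩
  rcases m with _ | ⟨a, t⟩
  · simpa [_root_.wconcat] using hl.2
  · refine hl.2.append (isChain_cons.mp hm).2 fun x hx y hy => ?_
    obtain rfl : a = x := by simpa [hlink] using hx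
    exact (isChain_cons.mp hm).1 y hy

lemma IsWalkFrom.ne_nil {x y : V} {l : List V} (h : IsWalkFrom G x y l) : l ≠ [] := by
  rintro rfl; simp [IsWalkFrom] at h

lemma IsWalkFrom.isWalk {x y : V} {l : List V} (h : IsWalkFrom G x y l) : IsWalk G l :=
  ⟨h.ne_nil, h.1⟩

lemma IsWalkFrom.wconcat {x y z : V} {l m : List V} (hl : IsWalkFrom G x y l)
    (hm : IsWalkFrom G y z m) : IsWalkFrom G x z (wconcat l m) := by
  have hlink : l.getLast? = m.head? := hl.2.2.trans hm.2.1.symm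
  exact ⟨(hl.isWalk.wconcat hm.1 hlink).2, (head?_wconcat hl.ne_nil m).trans hl.2.1,
    (getLast?_wconcat hlink).trans hm.2.2⟩

lemma IsWalkFrom.map {f : V → W} (hf : IsHom G H f) {x y : V} {l : List V}
    (h : IsWalkFrom G x y l) : IsWalkFrom H (f x) (f y) (l.map f) :=
  ⟨(isChain_map f).mpr (h.1.imp fun _ _ => hf), by simp [h.2.1], by simp [h.2.2]⟩

lemma isWalk_cons_cons {a b : V} {l : List V} :
    IsWalk G (a :: b :: l) ↔ G.Adj a b ∧ IsWalk G (b :: l) := by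
  simp only [IsWalk, ne_eq, reduceCtorEq, not_false_eq_true, true_and]
  exact isChain_cons_cons

lemma isWalk_singleton (a : V) : IsWalk G [a] := ⟨by simp, isChain_singleton a⟩

end Walks

section HomEqv

variable {G : XGraph V}

def HomStep (G : XGraph V) (l m : List V) : Prop :=
  PruneStep G l m ∨ SpiderStep G l m

lemma PruneOf.head?_eq {l m : List V} (h : PruneOf l m) : l.head? = m.head? := by
  obtain ⟨p, s, a, b, rfl, rfl⟩ := h
  cases p <;> simp

lemma PruneOf.getLast?_eq {l m : List V} (h : PruneOf l m) : l.getLast? = m.getLast? := by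
  obtain ⟨p, s, a, b, rfl, rfl⟩ := h
  simp [getLast?_append, getLast?_cons]

lemma SpiderStep.head?_eq {l m : List V} (h : SpiderStep G l m) : l.head? = m.head? := by
  obtain ⟨-, -, -, i, hi, -, hj⟩ := h
  rw [head?_eq_getElem?, head?_eq_getElem?]
  exact hj 0 hi.ne

lemma SpiderStep.getLast?_eq {l m : List V} (h : SpiderStep G l m) :
    l.getLast? = m.getLast? := by
  obtain ⟨-, -, hlen, i, -, hi, hj⟩ := h
  rw [getLast?_eq_getElem?, getLast?_eq_getElem?, ← hlen]
  exact hj _ (by omega)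

lemma HomStep.head?_eq {l m : List V} (h : HomStep G l m) : l.head? = m.head? := by
  rcases h with ⟨-, -, h | h⟩ | h
  exacts [h.head?_eq, h.head?_eq.symm, h.head?_eq]

lemma HomStep.getLast?_eq {l m : List V} (h : HomStep G l m) : l.getLast? = m.getLast? := by
  rcases h with ⟨-, -, h | h⟩ | h
  exacts [h.getLast?_eq, h.getLast?_eq.symm, h.getLast?_eq]

lemma SpiderStep.of_append_cons {p s : List V} {a b : V} (hp : p ≠ []) (hs : s ≠ [])
    (ha : IsWalk G (p ++ a :: s)) (hb : IsWalk G (p ++ b :: s)) :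
    SpiderStep G (p ++ a :: s) (p ++ b :: s) := by
  have hp' := length_pos_iff.mpr hp
  have hs' := length_pos_iff.mpr hs
  refine ⟨ha, hb, by simp, p.length, hp', by simp; omega, fun j hj => ?_⟩
  rcases lt_or_gt_of_ne hj with hj | hj
  · rw [getElem?_append_left hj, getElem?_append_left hj]
  · obtain ⟨k, rfl⟩ := Nat.exists_eq_add_of_lt hj
    rw [getElem?_append_right (by omega), getElem?_append_right (by omega)]
    simp [show p.length + k + 1 - p.length = k + 1 by omega]

lemma HomEqv.of_spider {p s : List V} {a b : V} (hp : p ≠ []) (hs : s ≠ [])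
    (ha : IsWalk G (p ++ a :: s)) (hb : IsWalk G (p ++ b :: s)) :
    HomEqv G (p ++ a :: s) (p ++ b :: s) :=
  .rel _ _ (Or.inr (.of_append_cons hp hs ha hb))

lemma PruneOf.wconcat_left {c l m : List V} (hlink : c.getLast? = l.head?) (h : PruneOf l m) :
    PruneOf (wconcat c l) (wconcat c m) := by
  obtain ⟨p, s, a, b, rfl, rfl⟩ := h
  rcases p with _ | ⟨x, p⟩
  · obtain ⟨c, rfl⟩ : ∃ c', c = c' ++ [a] := by
      rcases c.eq_nil_or_concat with rfl | ⟨c', x, rfl⟩ <;> simp_all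
    exact ⟨c, s, a, b, by simp [wconcat], by simp [wconcat]⟩
  · exact ⟨c ++ p, s, a, b, by simp [wconcat], by simp [wconcat]⟩

lemma PruneOf.wconcat_right {l m : List V} (h : PruneOf l m) (d : List V) :
    PruneOf (wconcat l d) (wconcat m d) := by
  obtain ⟨p, s, a, b, rfl, rfl⟩ := h
  exact ⟨p, s ++ d.tail, a, b, by simp [wconcat], by simp [wconcat]⟩

lemma SpiderStep.wconcat_left {c l m : List V} (hc : IsWalk G c)
    (hlink : c.getLast? = l.head?) (h : SpiderStep G l m) :
    SpiderStep G (wconcat c l) (wconcat c m) := by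
  have hhead := h.head?_eq
  obtain ⟨hl, hm, hlen, i, hi, hil, hj⟩ := h
  have hc' := length_pos_iff.mpr hc.1
  refine ⟨hc.wconcat hl.2 hlink, hc.wconcat hm.2 (hlink.trans hhead), by simp [wconcat, hlen],
    c.length + i - 1, by omega, by simp [wconcat]; omega, fun j hji => ?_⟩
  rcases lt_or_ge j c.length with hj' | hj'
  · simp only [wconcat, getElem?_append_left hj']
  · simp only [wconcat, getElem?_append_right hj', getElem?_tail]
    exact hj _ (by omega)

lemma SpiderStep.wconcat_right {l m d : List V} (hd : IsChain G.Adj d)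
    (hlink : l.getLast? = d.head?) (h : SpiderStep G l m) :
    SpiderStep G (wconcat l d) (wconcat m d) := by
  have hlast := h.getLast?_eq
  obtain ⟨hl, hm, hlen, i, hi, hil, hj⟩ := h
  refine ⟨hl.wconcat hd hlink, hm.wconcat hd (hlast ▸ hlink), by simp [wconcat, hlen],
    i, hi, by simp [wconcat]; omega, fun j hji => ?_⟩
  simp only [wconcat, getElem?_append, ← hlen, hj j hji]

lemma HomStep.wconcat_left {c l m : List V} (hc : IsWalk G c)
    (hlink : c.getLast? = l.head?) (h : HomStep G l m) :
    HomStep G (wconcat c l) (wconcat c m) := by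
  have hlink' := hlink.trans h.head?_eq
  rcases h with ⟨hl, hm, h | h⟩ | h
  · exact .inl ⟨hc.wconcat hl.2 hlink, hc.wconcat hm.2 hlink', .inl (h.wconcat_left hlink)⟩
  · exact .inl ⟨hc.wconcat hl.2 hlink, hc.wconcat hm.2 hlink', .inr (h.wconcat_left hlink')⟩
  · exact .inr (h.wconcat_left hc hlink)

lemma HomStep.wconcat_right {l m d : List V} (hd : IsChain G.Adj d)
    (hlink : l.getLast? = d.head?) (h : HomStep G l m) :
    HomStep G (wconcat l d) (wconcat m d) := by
  have hlink' := h.getLast?_eq ▸ hlink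
  rcases h with ⟨hl, hm, h | h⟩ | h
  · exact .inl ⟨hl.wconcat hd hlink, hm.wconcat hd hlink', .inl (h.wconcat_right d)⟩
  · exact .inl ⟨hl.wconcat hd hlink, hm.wconcat hd hlink', .inr (h.wconcat_right d)⟩
  · exact .inr (h.wconcat_right hd hlink)

lemma HomEqv.wconcat_left {c l m : List V} (hc : IsWalk G c)
    (hlink : c.getLast? = l.head?) (h : HomEqv G l m) :
    HomEqv G (wconcat c l) (wconcat c m) :=
  EqvGen.map_of_invariant (r := HomStep G) (P := fun l => c.getLast? = l.head?) (wconcat c)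
    (fun _ _ h => by rw [h.head?_eq]) (fun _ _ hlink h => h.wconcat_left hc hlink) h hlink

lemma HomEqv.wconcat_right {l m d : List V} (hd : IsChain G.Adj d)
    (hlink : l.getLast? = d.head?) (h : HomEqv G l m) :
    HomEqv G (wconcat l d) (wconcat m d) :=
  EqvGen.map_of_invariant (r := HomStep G) (P := fun l => l.getLast? = d.head?)
    (wconcat · d) (fun _ _ h => by rw [h.getLast?_eq])
    (fun _ _ hlink h => h.wconcat_right hd hlink) h hlink

end HomEqv

instance (G : XGraph V) : Trans (HomEqv G) (HomEqv G) (HomEqv G) :=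
  ⟨EqvGen.trans _ _ _⟩

lemma wconcat_singleton_right (l : List V) (a : V) : wconcat l [a] = l := by
  simp [wconcat]

lemma wconcat_singleton_left {l : List V} {a : V} (h : l.head? = some a) : wconcat [a] l = l := by
  cases l <;> simp_all [wconcat]

/-- Components `γ w : f w ⟶ g w` of a natural transformation `f_* ⟹ g_*` between the functors
induced on fundamental groupoids (automatically an isomorphism, `Π(H)` being a groupoid). -/
def IsNatTrans (G : XGraph V) (H : XGraph W) (f g : V → W) (γ : V → List W) : Prop :=
  (∀ w, IsWalkFrom H (f w) (g w) (γ w)) ∧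
    ∀ w w' α, IsWalkFrom G w w' α →
      HomEqv H (wconcat (γ w) (α.map g)) (wconcat (α.map f) (γ w'))

namespace IsNatTrans

variable {G : XGraph V} {H : XGraph W} {f g k : V → W} {γ δ : V → List W}

lemma refl (f : V → W) : IsNatTrans G H f f fun w => [f w] := by
  refine ⟨fun w => ⟨isChain_singleton _, rfl, rfl⟩, fun w w' α hα => ?_⟩
  rw [wconcat_singleton_left (by simp [hα.2.1]), wconcat_singleton_right]
  exact .refl _

lemma trans (hγ : IsNatTrans G H f g γ) (hδ : IsNatTrans G H g k δ) :
    IsNatTrans G H f k fun w => wconcat (γ w) (δ w) := by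
  refine ⟨fun w => (hγ.1 w).wconcat (hδ.1 w), fun w w' α hα => ?_⟩
  show HomEqv H (wconcat (wconcat (γ w) (δ w)) (α.map k)) _
  calc wconcat (wconcat (γ w) (δ w)) (α.map k)
      = wconcat (γ w) (wconcat (δ w) (α.map k)) := wconcat_assoc _ (hδ.1 w).ne_nil _
    HomEqv H _ (wconcat (γ w) (wconcat (α.map g) (δ w'))) :=
      (hδ.2 w w' α hα).wconcat_left (hγ.1 w).isWalk
        (by rw [(hγ.1 w).2.2, head?_wconcat (hδ.1 w).ne_nil, (hδ.1 w).2.1])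
    _ = wconcat (wconcat (γ w) (α.map g)) (δ w') :=
      (wconcat_assoc _ (by simpa using hα.ne_nil) _).symm
    HomEqv H _ (wconcat (wconcat (α.map f) (γ w')) (δ w')) :=
      (hγ.2 w w' α hα).wconcat_right (hδ.1 w').1
        (by rw [getLast?_wconcat (by simp [(hγ.1 w).2.2, hα.2.1]), (hδ.1 w').2.1]
            simp [hα.2.2])
    _ = wconcat (α.map f) (wconcat (γ w') (δ w')) := wconcat_assoc _ (hγ.1 w').ne_nil _

lemma of_adj (hf : IsHom G H f) (hg : IsHom G H g) (hγ : ∀ w, IsWalkFrom H (f w) (g w) (γ w))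
    (hedge : ∀ w v, G.Adj w v →
      HomEqv H (wconcat (γ w) [g w, g v]) (wconcat [f w, f v] (γ v))) :
    IsNatTrans G H f g γ := by
  refine ⟨hγ, fun w w' α hα => ?_⟩
  induction α generalizing w with
  | nil => exact absurd rfl hα.ne_nil
  | cons a t ih =>
    obtain rfl : a = w := by simpa using hα.2.1
    rcases t with _ | ⟨v, t⟩
    · obtain rfl : a = w' := by simpa using hα.2.2
      rw [map_singleton, map_singleton, wconcat_singleton_right,
        wconcat_singleton_left (hγ a).2.1]
      exact .refl _
    have hadj : G.Adj a v := (isChain_cons_cons.mp hα.1).1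
    have hvt : IsWalkFrom G v w' (v :: t) :=
      ⟨(isChain_cons_cons.mp hα.1).2, rfl, by simpa [getLast?_cons_cons] using hα.2.2⟩
    calc wconcat (γ a) (map g (a :: v :: t))
        = wconcat (wconcat (γ a) [g a, g v]) (map g (v :: t)) := by simp [wconcat]
      HomEqv H _ (wconcat (wconcat [f a, f v] (γ v)) (map g (v :: t))) :=
        (hedge a v hadj).wconcat_right (hvt.map hg).1
          (by rw [getLast?_wconcat (by simp [(hγ a).2.2])]; simp)
      _ = wconcat [f a, f v] (wconcat (γ v) (map g (v :: t))) :=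
        wconcat_assoc _ (hγ v).ne_nil _
      HomEqv H _ (wconcat [f a, f v] (wconcat (map f (v :: t)) (γ w'))) :=
        (ih v hvt).wconcat_left (isWalk_cons_cons.mpr ⟨hf hadj, isWalk_singleton _⟩)
          (by simp [head?_wconcat (hγ v).ne_nil, (hγ v).2.1])
      _ = wconcat (map f (a :: v :: t)) (γ w') := by simp [wconcat]

end IsNatTrans

lemma HtpyStep.isNatTrans {G : XGraph V} {H : XGraph W} {f g : V → W}
    (hstep : HtpyStep G H f g) {u : V → V} (hu : ∀ v, G.Adj v (u v)) :
    IsNatTrans G H f g fun w => [f w, g (u w), g w] := by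
  obtain ⟨hf, hg, hfg⟩ := hstep
  have hwalk {a b c d : W} (hab : H.Adj a b) (hbc : H.Adj b c) (hcd : H.Adj c d) :
      IsWalk H [a, b, c, d] := by
    simp [isWalk_cons_cons, isWalk_singleton, hab, hbc, hcd]
  refine .of_adj hf hg (fun w => ⟨isChain_cons_cons.mpr ⟨hfg _ _ (hu w),
    isChain_pair.mpr (hg (G.symm (hu w)))⟩, rfl, rfl⟩) fun w v hwv => ?_
  have hvw := G.symm hwv
  calc [f w, g (u w), g w, g v]
    HomEqv H _ [f w, g v, g w, g v] := .of_spider (p := [f w]) (s := [g w, g v]) (by simp)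
        (by simp) (hwalk (hfg _ _ (hu w)) (hg (G.symm (hu w))) (hg hwv))
        (hwalk (hfg _ _ hwv) (hg hvw) (hg hwv))
    HomEqv H _ [f w, f v, g w, g v] := .of_spider (p := [f w]) (s := [g w, g v]) (by simp)
        (by simp) (hwalk (hfg _ _ hwv) (hg hvw) (hg hwv)) (hwalk (hf hwv) (hfg _ _ hvw) (hg hwv))
    HomEqv H _ [f w, f v, g (u v), g v] := .of_spider (p := [f w, f v]) (s := [g v]) (by simp)
        (by simp) (hwalk (hf hwv) (hfg _ _ hvw) (hg hwv))
        (hwalk (hf hwv) (hfg _ _ (hu v)) (hg (G.symm (hu v))))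

theorem stmt11_general (G : XGraph V) (H : XGraph W)
    (hG : ∀ v : V, ∃ u, G.Adj v u)
    (φ ψ : V → W)
    (h : Homotopic G H φ ψ) :
    ∃ γ : V → List W,
      (∀ w : V, IsWalkFrom H (φ w) (ψ w) (γ w)) ∧
      ∀ (w w' : V) (α : List V), IsWalkFrom G w w' α →
        HomEqv H (wconcat (γ w) (α.map ψ)) (wconcat (α.map φ) (γ w')) := by
  choose u hu using hG
  induction h with
  | refl => exact ⟨_, IsNatTrans.refl φ⟩
  | tail _ hstep ih =>
    obtain ⟨γ, hγ⟩ := ih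
    exact ⟨_, IsNatTrans.trans hγ (hstep.isNatTrans hu)⟩

/-- for finite graphs with no isolated vertices, ×-homotopic morphisms
induce naturally isomorphic functors on fundamental groupoids. -/
theorem stmt11 [Fintype V] [Fintype W] (G : XGraph V) (H : XGraph W)
    (hG : ∀ v : V, ∃ u, G.Adj v u) (hH : ∀ w : W, ∃ u, H.Adj w u)
    (φ ψ : V → W) (hφ : IsHom G H φ) (hψ : IsHom G H ψ)
    (h : Homotopic G H φ ψ) :
    ∃ γ : V → List W,
      (∀ w : V, IsWalkFrom H (φ w) (ψ w) (γ w)) ∧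
      ∀ (w w' : V) (α : List V), IsWalkFrom G w w' α →
        HomEqv H (wconcat (γ w) (α.map ψ)) (wconcat (α.map φ) (γ w')) :=
  stmt11_general G H hG φ ψ h
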